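/- Let β > 0, 0 ≤ T < τ̄, F₁, F₂ ∈ ℝ constants, and let A = (A₁, A₂) ∈ ℝ² solve −A = (β/(β+1))·[[2,−1],[−1,2]]·A + (F₁, F₂). Then Y(t) = (τ̄−t)A − (τ̄−T)Φ(t;T,τ̄)A, with Φ the fundamental matrix Φ(t;T,τ̄) = (1/2)((τ̄−T)/(τ̄−t))^(β/(β+1))[[1,1],[1,1]] + (1/2)((τ̄−T)/(τ̄−t))^(3β/(β+1))[[1,−1],[−1,1]], solves on [T, τ̄) the equation Ẏ − (β/(β+1))·(1/(τ̄−t))·[[2,−1],[−1,2]] Y = (F₁, F₂) with Y(T) = (0,0). -/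

import Mathlib

noncomputable def fundMatrix9 (β T τ : ℝ) (t : ℝ) : Matrix (Fin 2) (Fin 2) ℝ :=
  (((1 : ℝ) / 2) * ((τ - T) / (τ - t)) ^ (β / (β + 1))) •
      (!![1, 1; 1, 1] : Matrix (Fin 2) (Fin 2) ℝ) +
    (((1 : ℝ) / 2) * ((τ - T) / (τ - t)) ^ (3 * β / (β + 1))) •
      (!![1, -1; -1, 1] : Matrix (Fin 2) (Fin 2) ℝ)

/-!
The matrix `M = [[2, -1], [-1, 2]]` acts on the eigenvectors `(1, 1)` and `(1, -1)` by `1` and `3`.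
Splitting `A` into its components along them, the forcing term `(F₁, F₂) = -(I + k M) A`
(with `k = β / (β + 1)`) splits too, and the system decouples into two scalar equations
`y' = c / (τ - s) * y - (1 + c)` with `c = k` and `c = 3k`, each solved explicitly.
-/

open Matrix

noncomputable section

/-- The solution of `y' = c / (τ - s) * y - (1 + c)` with `y(T) = 0`. -/
def modeProfile (T τ c s : ℝ) : ℝ :=
  (τ - s) - (τ - T) * ((τ - T) / (τ - s)) ^ c

theorem modeProfile_self (T τ c : ℝ) : modeProfile T τ c T = 0 := by
  rcases eq_or_ne (τ - T) 0 with h | h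
  · simp [modeProfile, h]
  · simp [modeProfile, div_self h]

theorem hasDerivAt_modeProfile {T τ t : ℝ} (c : ℝ) (hT : T ≠ τ) (ht : t ≠ τ) :
    HasDerivAt (modeProfile T τ c) (c / (τ - t) * modeProfile T τ c t - (1 + c)) t := by
  have hτt : τ - t ≠ 0 := sub_ne_zero.2 ht.symm
  have hr : (τ - T) / (τ - t) ≠ 0 := div_ne_zero (sub_ne_zero.2 hT.symm) hτt
  have hlin : HasDerivAt (fun s : ℝ => τ - s) (-1) t := by
    simpa using (hasDerivAt_id t).const_sub τ
  have hratio : HasDerivAt (fun s : ℝ => (τ - T) / (τ - s)) ((τ - T) / (τ - t) ^ 2) t := by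
    refine ((hlin.inv hτt).const_mul (τ - T)).congr_deriv ?_
    field_simp
  have hpow := (hratio.rpow_const (p := c) (Or.inl hr)).const_mul (τ - T)
  refine (hlin.sub hpow).congr_deriv ?_
  rw [Real.rpow_sub_one hr, modeProfile]
  field_simp
  ring

theorem hasDerivAt_modeProfile_smul {n : Type*} [Fintype n] {T τ t : ℝ} (M : Matrix n n ℝ)
    (e : n → ℝ) (k μ : ℝ) (he : M *ᵥ e = μ • e) (hT : T ≠ τ) (ht : t ≠ τ) :
    HasDerivAt (fun s => modeProfile T τ (k * μ) s • e)
      ((k * (τ - t)⁻¹) • M *ᵥ (modeProfile T τ (k * μ) t • e) - (1 + k * μ) • e) t := by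
  refine ((hasDerivAt_modeProfile (k * μ) hT ht).smul_const e).congr_deriv ?_
  rw [mulVec_smul, he, div_eq_mul_inv]
  module

def symProj : Matrix (Fin 2) (Fin 2) ℝ := (1 / 2 : ℝ) • !![1, 1; 1, 1]

def antisymProj : Matrix (Fin 2) (Fin 2) ℝ := (1 / 2 : ℝ) • !![1, -1; -1, 1]

theorem symProj_add_antisymProj : symProj + antisymProj = 1 := by
  ext i j; fin_cases i <;> fin_cases j <;> norm_num [symProj, antisymProj]

theorem mul_symProj : !![2, -1; -1, 2] * symProj = symProj := by
  ext i j; fin_cases i <;> fin_cases j <;> norm_num [symProj]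

theorem mul_antisymProj : !![2, -1; -1, 2] * antisymProj = (3 : ℝ) • antisymProj := by
  ext i j; fin_cases i <;> fin_cases j <;> norm_num [antisymProj]

theorem fundMatrix9_eq (β T τ t : ℝ) :
    fundMatrix9 β T τ t = ((τ - T) / (τ - t)) ^ (β / (β + 1)) • symProj
      + ((τ - T) / (τ - t)) ^ (3 * β / (β + 1)) • antisymProj := by
  simp only [fundMatrix9, symProj, antisymProj, smul_smul, mul_comm]

end

theorem stmt9_general (β T τ F₁ F₂ : ℝ)
    (A : Fin 2 → ℝ)
    (hA : -A = (β / (β + 1)) • Matrix.mulVec !![2, -1; -1, 2] A + ![F₁, F₂])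
    (Y : ℝ → Fin 2 → ℝ)
    (hY : ∀ t, Y t = (τ - t) • A - (τ - T) • Matrix.mulVec (fundMatrix9 β T τ t) A) :
    Y T = 0 ∧
    ∀ t ∈ Set.Ico T τ, ∀ p : Fin 2,
      HasDerivAt (fun s => Y s p)
        (((β / (β + 1)) * (τ - t)⁻¹) * Matrix.mulVec !![2, -1; -1, 2] (Y t) p
          + ![F₁, F₂] p) t := by
  set k := β / (β + 1)
  set e₁ := symProj *ᵥ A
  set e₃ := antisymProj *ᵥ A
  have hA_split : A = e₁ + e₃ := by
    rw [← add_mulVec, symProj_add_antisymProj, one_mulVec]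
  have he₁ : !![2, -1; -1, 2] *ᵥ e₁ = (1 : ℝ) • e₁ := by
    rw [mulVec_mulVec, mul_symProj, one_smul]
  have he₃ : !![2, -1; -1, 2] *ᵥ e₃ = (3 : ℝ) • e₃ := by
    rw [mulVec_mulVec, mul_antisymProj, smul_mulVec]
  have hY_split : Y = fun s => modeProfile T τ (k * 1) s • e₁ + modeProfile T τ (k * 3) s • e₃ := by
    funext s
    rw [hY, fundMatrix9_eq, add_mulVec, smul_mulVec, smul_mulVec,
      show 3 * β / (β + 1) = k * 3 by ring, mul_one]
    nth_rewrite 1 [hA_split]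
    simp only [modeProfile]
    module
  have hF : ![F₁, F₂] = -((1 + k * 1) • e₁ + (1 + k * 3) • e₃) := by
    rw [eq_sub_of_add_eq' hA.symm, hA_split, mulVec_add, he₁, he₃]
    module
  refine ⟨by simp [hY_split, modeProfile_self], fun t ht p => ?_⟩
  have hT : T ≠ τ := (ht.1.trans_lt ht.2).ne
  have hderiv : HasDerivAt Y ((k * (τ - t)⁻¹) • !![2, -1; -1, 2] *ᵥ Y t + ![F₁, F₂]) t := by
    rw [hY_split, hF]
    refine ((hasDerivAt_modeProfile_smul _ e₁ k 1 he₁ hT ht.2.ne).add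
      (hasDerivAt_modeProfile_smul _ e₃ k 3 he₃ hT ht.2.ne)).congr_deriv ?_
    rw [mulVec_add]
    module
  exact hasDerivAt_pi.1 hderiv p

theorem stmt9 (β T τ F₁ F₂ : ℝ) (hβ : 0 < β) (hT : 0 ≤ T) (hTτ : T < τ)
    (A : Fin 2 → ℝ)
    (hA : -A = (β / (β + 1)) • Matrix.mulVec !![2, -1; -1, 2] A + ![F₁, F₂])
    (Y : ℝ → Fin 2 → ℝ)
    (hY : ∀ t, Y t = (τ - t) • A - (τ - T) • Matrix.mulVec (fundMatrix9 β T τ t) A) :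
    Y T = 0 ∧
    ∀ t ∈ Set.Ico T τ, ∀ p : Fin 2,
      HasDerivAt (fun s => Y s p)
        (((β / (β + 1)) * (τ - t)⁻¹) * Matrix.mulVec !![2, -1; -1, 2] (Y t) p
          + ![F₁, F₂] p) t :=
  stmt9_general β T τ F₁ F₂ A hA Y hY
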